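/- arXiv:2501.18888 — 4 statements merged into one kernel-verified Lean document; each statement's English description precedes it below -/
import Mathlib

section
/- Suppose X and Y satisfy the PHR model with constant γ > 0 and there is M < ∞ with f(x) ≤ M for all x ≥ 0. Then for every t ≥ 0 with F̄(t) > 0, the weighted residual inaccuracy satisfies a₁ M² ≤ J^w(X,Y;t) ≤ 0, where a₁ = -(γ/(2 F̄(t)^{γ+1}))∫_t^∞ x F̄(x)^{γ−1} dx, assuming ∫_t^∞ x F̄(x)^{γ−1} dx is finite. -/
/-!
The PHR model gives `Ḡ = F̄ ^ γ`: since `F̄` is continuous, the image of the measure `f(x) dx`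
on `(t, ∞)` under `F̄` is Lebesgue measure on `(0, F̄ t)`, so
`∫_t^∞ γ f F̄^(γ-1) = ∫_0^(F̄ t) γ u^(γ-1) du = F̄(t)^γ` and the normalising constant is
`F̄(t) Ḡ(t) = F̄(t)^(γ+1)`. The integrand `x f g = γ x f² F̄^(γ-1)` is nonnegative and at most
`γ M² x F̄^(γ-1)`, which gives both bounds.
-/

open MeasureTheory Set Filter Topology

theorem IsUpperSet.eq_Ioi_csInf {α : Type*} [ConditionallyCompleteLinearOrder α]
    [TopologicalSpace α] [OrderTopology α] [DenselyOrdered α] [NoMinOrder α] {U : Set α}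
    (hU : IsUpperSet U) (hUo : IsOpen U) (hne : U.Nonempty) (hbdd : BddBelow U) :
    U = Ioi (sInf U) := by
  ext x
  refine ⟨fun hx => ?_, fun hx => ?_⟩
  · obtain ⟨l, hlx, hl⟩ := exists_Ioc_subset_of_mem_nhds (hUo.mem_nhds hx) (exists_lt x)
    obtain ⟨y, hly, hyx⟩ := exists_between hlx
    exact (csInf_le hbdd (hl ⟨hly, hyx.le⟩)).trans_lt hyx
  · obtain ⟨y, hy, hyx⟩ := exists_lt_of_csInf_lt hne hx
    exact hU hyx.le hy

theorem tendsto_measure_Ioi_atBot (μ : Measure ℝ) :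
    Tendsto (fun x => μ (Ioi x)) atBot (𝓝 (μ univ)) := by
  have := tendsto_measure_iUnion_atBot (μ := μ) (fun _ _ h => Ioi_subset_Ioi h)
  rwa [iUnion_Ioi] at this

section TailMeasure

variable {μ : Measure ℝ} [IsFiniteMeasure μ]

theorem tendsto_measure_Ioi_atTop : Tendsto (fun x => μ (Ioi x)) atTop (𝓝 0) := by
  have := tendsto_measure_iInter_atTop (μ := μ) (fun x : ℝ => measurableSet_Ioi.nullMeasurableSet)
    (fun _ _ h => Ioi_subset_Ioi h) ⟨0, measure_ne_top μ _⟩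
  rwa [show ⋂ x : ℝ, Ioi x = ∅ from eq_empty_of_forall_notMem fun x hx => lt_irrefl x
    (mem_iInter.1 hx x), measure_empty] at this

theorem measure_setOf_measureReal_Ioi_lt (hS : Continuous fun x => μ.real (Ioi x)) (s : ℝ) :
    μ {x | μ.real (Ioi x) < s} = ENNReal.ofReal (min s (μ.real univ)) := by
  set S := fun x => μ.real (Ioi x)
  set U := {x | S x < s}
  have hU : IsUpperSet U := fun a b hab ha =>
    (measureReal_mono (Ioi_subset_Ioi hab) : S b ≤ S a).trans_lt ha
  have hS_top : Tendsto S atTop (𝓝 0) := by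
    have := (ENNReal.tendsto_toReal ENNReal.zero_ne_top).comp (tendsto_measure_Ioi_atTop (μ := μ))
    rwa [ENNReal.toReal_zero] at this
  have hS_bot : Tendsto S atBot (𝓝 (μ.real univ)) :=
    (ENNReal.tendsto_toReal (measure_ne_top μ _)).comp (tendsto_measure_Ioi_atBot μ)
  -- `U` is an open upper set, so it is empty, everything, or `Ioi a` with `S a = s`.
  rcases U.eq_empty_or_nonempty with hempty | hne
  · have hs : s ≤ 0 := ge_of_tendsto' hS_top fun x => not_lt.1 fun hx =>
      (eq_empty_iff_forall_notMem.1 hempty x) hx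
    rw [hempty, measure_empty, ENNReal.ofReal_eq_zero.2 ((min_le_left _ _).trans hs)]
  by_cases hbdd : BddBelow U
  · have hUa : U = Ioi (sInf U) := hU.eq_Ioi_csInf (isOpen_lt hS continuous_const) hne hbdd
    have hSa : S (sInf U) = s := by
      refine le_antisymm ?_ (not_lt.1 fun h => (lt_irrefl (sInf U)) (hUa ▸ h : sInf U ∈ Ioi _))
      refine le_of_tendsto ((hS.tendsto _).mono_left (nhdsWithin_le_nhds (s := Ioi (sInf U)))) ?_
      filter_upwards [self_mem_nhdsWithin] with x hx using (hUa ▸ hx : x ∈ U).le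
    rw [hUa, ← ofReal_measureReal, show μ.real (Ioi (sInf U)) = s from hSa,
      min_eq_left (hSa ▸ measureReal_mono (subset_univ _))]
  · have hUuniv : U = univ := eq_univ_of_forall fun x => by
      obtain ⟨y, hy, hyx⟩ := not_bddBelow_iff.1 hbdd x
      exact hU hyx.le hy
    have hs : μ.real univ ≤ s := le_of_tendsto' hS_bot fun x => (hUuniv ▸ mem_univ x : x ∈ U).le
    rw [hUuniv, min_eq_right hs, ofReal_measureReal]

theorem map_measureReal_Ioi (hS : Continuous fun x => μ.real (Ioi x)) :
    μ.map (fun x => μ.real (Ioi x)) = volume.restrict (Ioo 0 (μ.real univ)) := by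
  refine ext_of_generate_finite _ (BorelSpace.measurable_eq.trans (borel_eq_generateFrom_Iio ℝ))
    isPiSystem_Iio ?_ ?_
  · rintro _ ⟨s, rfl⟩
    rw [Measure.map_apply hS.measurable measurableSet_Iio, Measure.restrict_apply measurableSet_Iio,
      Iio_inter_Ioo, Real.volume_Ioo, sub_zero]
    exact measure_setOf_measureReal_Ioi_lt hS s
  · rw [Measure.map_apply hS.measurable MeasurableSet.univ, Measure.restrict_apply_univ,
      Real.volume_Ioo, sub_zero, preimage_univ, ofReal_measureReal]

end TailMeasure

section Density

variable {f : ℝ → ℝ}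

theorem integral_Ioi_mul_comp_integral_Ioi (hf : Integrable f) (hf_nonneg : ∀ x, 0 ≤ f x)
    {φ : ℝ → ℝ} (hφ : Measurable φ) (t : ℝ) :
    ∫ x in Ioi t, f x * φ (∫ y in Ioi x, f y) = ∫ y in Ioo 0 (∫ y in Ioi t, f y), φ y := by
  set ν := (volume.restrict (Ioi t)).withDensity (fun x => ENNReal.ofReal (f x))
  have hν : ∀ s, MeasurableSet s → ν.real s = ∫ x in s ∩ Ioi t, f x := fun s hs => by
    rw [measureReal_def, withDensity_apply _ hs, Measure.restrict_restrict hs,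
      ← ofReal_integral_eq_lintegral_ofReal hf.integrableOn (ae_of_all _ fun x => hf_nonneg x),
      ENNReal.toReal_ofReal (setIntegral_nonneg (hs.inter measurableSet_Ioi) fun x _ => hf_nonneg x)]
  have : IsFiniteMeasure ν := isFiniteMeasure_withDensity_ofReal hf.integrableOn.hasFiniteIntegral
  have hS : Continuous fun x => ν.real (Ioi x) := by
    simp_rw [hν _ measurableSet_Ioi, Ioi_inter_Ioi]
    exact (hf.integrableOn.continuousOn_Ici_primitive_Ioi (a₀ := t)).comp_continuous
      (continuous_id.max continuous_const) fun x => le_max_right x t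
  calc ∫ x in Ioi t, f x * φ (∫ y in Ioi x, f y)
      = ∫ x, φ (∫ y in Ioi x, f y) ∂ν := by
        rw [integral_withDensity_eq_integral_toReal_smul₀ hf.aemeasurable.restrict.ennreal_ofReal
          (ae_of_all _ fun _ => ENNReal.ofReal_lt_top)]
        simp only [ENNReal.toReal_ofReal (hf_nonneg _), smul_eq_mul]
    _ = ∫ x, φ (ν.real (Ioi x)) ∂ν := by
        refine integral_congr_ae ?_
        filter_upwards [(withDensity_absolutelyContinuous _ _).ae_le
          (ae_restrict_mem measurableSet_Ioi)] with x (hx : t < x)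
        rw [hν _ measurableSet_Ioi, Ioi_inter_Ioi, max_eq_left hx.le]
    _ = ∫ y, φ y ∂(ν.map fun x => ν.real (Ioi x)) :=
        (integral_map hS.measurable.aemeasurable hφ.aestronglyMeasurable).symm
    _ = ∫ y in Ioo 0 (∫ y in Ioi t, f y), φ y := by
        rw [map_measureReal_Ioi hS, hν _ MeasurableSet.univ, univ_inter]

theorem integral_Ioi_mul_rpow_integral_Ioi (hf : Integrable f) (hf_nonneg : ∀ x, 0 ≤ f x)
    {γ : ℝ} (hγ : 0 < γ) (t : ℝ) :
    ∫ x in Ioi t, γ * f x * (∫ y in Ioi x, f y) ^ (γ - 1) = (∫ y in Ioi t, f y) ^ γ := by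
  have hc : 0 ≤ ∫ y in Ioi t, f y := setIntegral_nonneg measurableSet_Ioi fun y _ => hf_nonneg y
  calc ∫ x in Ioi t, γ * f x * (∫ y in Ioi x, f y) ^ (γ - 1)
      = ∫ x in Ioi t, f x * (γ * (∫ y in Ioi x, f y) ^ (γ - 1)) := by
        simp only [mul_comm γ, mul_assoc]
    _ = ∫ y in (0)..(∫ y in Ioi t, f y), γ * y ^ (γ - 1) := by
        rw [integral_Ioi_mul_comp_integral_Ioi hf hf_nonneg (φ := fun y => γ * y ^ (γ - 1))
            (by fun_prop) t,
          intervalIntegral.integral_of_le hc, integral_Ioc_eq_integral_Ioo]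
    _ = (∫ y in Ioi t, f y) ^ γ := by
        rw [intervalIntegral.integral_const_mul, integral_rpow (by left; linarith), sub_add_cancel,
          Real.zero_rpow hγ.ne', sub_zero, mul_div_cancel₀ _ hγ.ne']

end Density

theorem integral_Ioi_mul_mul_le_of_phr {f g : ℝ → ℝ} {γ M t : ℝ} (hγ : 0 ≤ γ) (ht : 0 ≤ t)
    (hf_nonneg : ∀ x, 0 ≤ f x) (hg_nonneg : ∀ x, 0 ≤ g x)
    (hphr : ∀ x ≥ (0 : ℝ), g x = γ * f x * (∫ y in Ioi x, f y) ^ (γ - 1))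
    (hM : ∀ x ≥ (0 : ℝ), f x ≤ M)
    (hfin : IntegrableOn (fun x => x * (∫ y in Ioi x, f y) ^ (γ - 1)) (Ioi t)) :
    ∫ x in Ioi t, x * f x * g x ≤ γ * M ^ 2 * ∫ x in Ioi t, x * (∫ y in Ioi x, f y) ^ (γ - 1) := by
  rw [← integral_const_mul]
  refine integral_mono_of_nonneg (ae_restrict_of_forall_mem measurableSet_Ioi fun x hx => ?_)
    (hfin.const_mul _) (ae_restrict_of_forall_mem measurableSet_Ioi fun x hx => ?_)
  · have := ht.trans hx.le; have := hf_nonneg x; have := hg_nonneg x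
    positivity
  have hx : 0 ≤ x := ht.trans hx.le
  have hfx := hf_nonneg x
  have hP : 0 ≤ (∫ y in Ioi x, f y) ^ (γ - 1) :=
    Real.rpow_nonneg (setIntegral_nonneg measurableSet_Ioi fun y _ => hf_nonneg y) _
  calc x * f x * g x = γ * f x ^ 2 * (x * (∫ y in Ioi x, f y) ^ (γ - 1)) := by
        rw [hphr x hx]; ring
    _ ≤ γ * M ^ 2 * (x * (∫ y in Ioi x, f y) ^ (γ - 1)) := by gcongr; exact hM x hx

theorem weighted_residual_inaccuracy_bounds_bounded_density_general
    (f g : ℝ → ℝ) (γ : ℝ) (hγ : 0 < γ) (M : ℝ)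
    (hf_nonneg : ∀ x, 0 ≤ f x) (hg_nonneg : ∀ x, 0 ≤ g x)
    (hf_one : ∫ x, f x = 1)
    (hphr : ∀ x ≥ (0 : ℝ), g x = γ * f x * (∫ y in Ioi x, f y) ^ (γ - 1))
    (hM : ∀ x ≥ (0 : ℝ), f x ≤ M)
    (t : ℝ) (ht : 0 ≤ t)
    (hfin : IntegrableOn (fun x => x * (∫ y in Ioi x, f y) ^ (γ - 1)) (Ioi t)) :
    (-(γ / (2 * (∫ y in Ioi t, f y) ^ (γ + 1))) *
          ∫ x in Ioi t, x * (∫ y in Ioi x, f y) ^ (γ - 1)) * M ^ 2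
        ≤ -(1 / 2) * ∫ x in Ioi t,
            x * f x * g x / ((∫ y in Ioi t, f y) * (∫ y in Ioi t, g y))
      ∧ -(1 / 2) * ∫ x in Ioi t,
            x * f x * g x / ((∫ y in Ioi t, f y) * (∫ y in Ioi t, g y)) ≤ 0 := by
  have hf_int : Integrable f := .of_integral_ne_zero (by rw [hf_one]; exact one_ne_zero)
  set c := ∫ y in Ioi t, f y
  have hc : 0 ≤ c := setIntegral_nonneg measurableSet_Ioi fun y _ => hf_nonneg y
  have hG : ∫ y in Ioi t, g y = c ^ γ := by
    rw [← integral_Ioi_mul_rpow_integral_Ioi hf_int hf_nonneg hγ t]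
    exact setIntegral_congr_fun measurableSet_Ioi fun x hx => hphr x (ht.trans hx.le)
  have hden : c * c ^ γ = c ^ (γ + 1) := by rw [Real.rpow_add_one' hc (by linarith), mul_comm]
  rw [hG, hden, integral_div]
  have hJ_nonneg : 0 ≤ ∫ x in Ioi t, x * f x * g x :=
    setIntegral_nonneg measurableSet_Ioi fun x hx => by
      have := ht.trans hx.le; have := hf_nonneg x; have := hg_nonneg x; positivity
  have hJ_le := integral_Ioi_mul_mul_le_of_phr hγ.le ht hf_nonneg hg_nonneg hphr hM hfin
  have hC : 0 ≤ c ^ (γ + 1) := Real.rpow_nonneg hc _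
  constructor
  · calc _ = -(1 / 2) * (γ * M ^ 2 * ∫ x in Ioi t, x * (∫ y in Ioi x, f y) ^ (γ - 1))
          / c ^ (γ + 1) := by ring
      _ ≤ _ := by
        rw [mul_div_assoc]
        exact mul_le_mul_of_nonpos_left (div_le_div_of_nonneg_right hJ_le hC) (by norm_num)
  · exact mul_nonpos_of_nonpos_of_nonneg (by norm_num) (div_nonneg hJ_nonneg hC)

/-- under the PHR model with a bounded density `f ≤ M`,
`a₁ M² ≤ J^w(X,Y;t) ≤ 0` with `a₁ = -(γ/(2F̄(t)^{γ+1}))∫_t^∞ x F̄(x)^{γ−1} dx`. -/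
theorem weighted_residual_inaccuracy_bounds_bounded_density
    (f g : ℝ → ℝ) (γ : ℝ) (hγ : 0 < γ) (M : ℝ)
    (hf_meas : Measurable f) (hg_meas : Measurable g)
    (hf_nonneg : ∀ x, 0 ≤ f x) (hg_nonneg : ∀ x, 0 ≤ g x)
    (hf_zero : ∀ x < 0, f x = 0) (hg_zero : ∀ x < 0, g x = 0)
    (hf_one : ∫ x, f x = 1) (hg_one : ∫ x, g x = 1)
    (hphr : ∀ x ≥ (0 : ℝ), g x = γ * f x * (∫ y in Ioi x, f y) ^ (γ - 1))
    (hM : ∀ x ≥ (0 : ℝ), f x ≤ M)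
    (t : ℝ) (ht : 0 ≤ t) (hF : 0 < ∫ x in Ioi t, f x)
    (hfin : IntegrableOn (fun x => x * (∫ y in Ioi x, f y) ^ (γ - 1)) (Ioi t)) :
    (-(γ / (2 * (∫ y in Ioi t, f y) ^ (γ + 1))) *
          ∫ x in Ioi t, x * (∫ y in Ioi x, f y) ^ (γ - 1)) * M ^ 2
        ≤ -(1 / 2) * ∫ x in Ioi t,
            x * f x * g x / ((∫ y in Ioi t, f y) * (∫ y in Ioi t, g y))
      ∧ -(1 / 2) * ∫ x in Ioi t,
            x * f x * g x / ((∫ y in Ioi t, f y) * (∫ y in Ioi t, g y)) ≤ 0 :=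
  weighted_residual_inaccuracy_bounds_bounded_density_general f g γ hγ M hf_nonneg hg_nonneg hf_one
    hphr hM t ht hfin
end

section
/- Suppose X is uniformly distributed on (c,d) with 0 ≤ c < d, i.e. f(x) = 1/(d−c) for c < x < d and f = 0 otherwise, and X and Y satisfy the PHR model with constant γ > 0, so that g(x) = γ(d−x)^{γ−1}/(d−c)^γ on (c,d). Then for every t with c ≤ t < d, J^w(X,Y;t) = (γt + d)/(2(γ+1)(t−d)). -/
open MeasureTheory Set

/-!
On `(t, d)` all three integrands are constant multiples of `(d - x) ^ (γ - 1)` or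
`x * (d - x) ^ (γ - 1)`, which the substitution `u = d - x` turns into power integrals.
In the quotient the normalising powers of `d - c` cancel, and so does `(d - t) ^ γ`.
-/

theorem setIntegral_Ioi_eq_intervalIntegral_of_eq_ite {c d t : ℝ} (hct : c ≤ t) (htd : t ≤ d)
    {h φ : ℝ → ℝ} (hh : ∀ x, h x = if x ∈ Ioo c d then φ x else 0) :
    ∫ x in Ioi t, h x = ∫ x in t..d, φ x := by
  have hind : EqOn h ((Ioo t d).indicator φ) (Ioi t) := by
    intro x (hx : t < x)
    by_cases hxd : x < d
    · rw [hh, if_pos (mem_Ioo.2 ⟨hct.trans_lt hx, hxd⟩), indicator_of_mem (mem_Ioo.2 ⟨hx, hxd⟩)]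
    · rw [hh, if_neg (fun hm => hxd hm.2), indicator_of_notMem (fun hm => hxd hm.2)]
  rw [setIntegral_congr_fun measurableSet_Ioi hind, setIntegral_indicator measurableSet_Ioo,
    inter_eq_self_of_subset_right Ioo_subset_Ioi_self, intervalIntegral.integral_of_le htd,
    integral_Ioc_eq_integral_Ioo]

theorem integral_sub_rpow (a b : ℝ) {r : ℝ} (hr : -1 < r) :
    ∫ x in a..b, (b - x) ^ r = (b - a) ^ (r + 1) / (r + 1) := by
  rw [intervalIntegral.integral_comp_sub_left (fun u => u ^ r), integral_rpow (Or.inl hr), sub_self,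
    Real.zero_rpow (by linarith), sub_zero]

theorem intervalIntegrable_sub_rpow (a b : ℝ) {r : ℝ} (hr : -1 < r) :
    IntervalIntegrable (fun x => (b - x) ^ r) volume a b := by
  simpa using (intervalIntegral.intervalIntegrable_rpow' (a := b - a) (b := b - b) hr).comp_sub_left b

theorem integral_mul_sub_rpow {a b : ℝ} (hab : a ≤ b) {r : ℝ} (hr : -1 < r) :
    ∫ x in a..b, x * (b - x) ^ r = (b - a) ^ (r + 1) * ((r + 1) * a + b) / ((r + 1) * (r + 2)) := by
  have hsplit : EqOn (fun x => x * (b - x) ^ r) (fun x => b * (b - x) ^ r - (b - x) ^ (r + 1))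
      (uIcc a b) := by
    intro x hx
    rw [uIcc_of_le hab] at hx
    simp only [Real.rpow_add_one' (sub_nonneg.2 hx.2) (by linarith : r + 1 ≠ 0)]
    ring
  have hr1 : -1 < r + 1 := by linarith
  rw [intervalIntegral.integral_congr hsplit, intervalIntegral.integral_sub
    ((intervalIntegrable_sub_rpow a b hr).const_mul b) (intervalIntegrable_sub_rpow a b hr1),
    intervalIntegral.integral_const_mul, integral_sub_rpow a b hr, integral_sub_rpow a b hr1,
    Real.rpow_add_one' (sub_nonneg.2 hab) (by linarith : r + 1 + 1 ≠ 0), add_assoc r 1 1,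
    one_add_one_eq_two]
  have hr1_ne : r + 1 ≠ 0 := by linarith
  have hr2_ne : r + 2 ≠ 0 := by linarith
  field_simp
  ring

theorem weighted_residual_inaccuracy_uniform_phr_general
    (c d γ t : ℝ) (hγ : 0 < γ)
    (ht : c ≤ t) (htd : t < d)
    (f g : ℝ → ℝ)
    (hf : ∀ x, f x = if x ∈ Ioo c d then 1 / (d - c) else 0)
    (hg : ∀ x, g x = if x ∈ Ioo c d then γ * (d - x) ^ (γ - 1) / (d - c) ^ γ else 0) :
    -(1 / 2) * ∫ x in Ioi t,
        x * f x * g x / ((∫ y in Ioi t, f y) * (∫ y in Ioi t, g y))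
      = (γ * t + d) / (2 * (γ + 1) * (t - d)) := by
  have hr : -1 < γ - 1 := by linarith
  have hfg : ∀ x, x * f x * g x =
      if x ∈ Ioo c d then 1 / (d - c) * (γ / (d - c) ^ γ) * (x * (d - x) ^ (γ - 1)) else 0 := by
    intro x
    rw [hf, hg]
    split_ifs <;> ring
  have hF : ∫ y in Ioi t, f y = (d - t) / (d - c) := by
    rw [setIntegral_Ioi_eq_intervalIntegral_of_eq_ite ht htd.le hf, intervalIntegral.integral_const,
      smul_eq_mul]
    ring
  have hG : ∫ y in Ioi t, g y = (d - t) ^ γ / (d - c) ^ γ := by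
    rw [setIntegral_Ioi_eq_intervalIntegral_of_eq_ite ht htd.le hg]
    simp only [mul_div_right_comm γ, intervalIntegral.integral_const_mul, integral_sub_rpow t d hr, sub_add_cancel]
    field_simp
  have hFG : ∫ x in Ioi t, x * f x * g x =
      1 / (d - c) * (γ / (d - c) ^ γ) * ((d - t) ^ γ * (γ * t + d) / (γ * (γ + 1))) := by
    rw [setIntegral_Ioi_eq_intervalIntegral_of_eq_ite ht htd.le hfg,
      intervalIntegral.integral_const_mul, integral_mul_sub_rpow htd.le hr]
    ring_nf
  have hdt : 0 < d - t := sub_pos.2 htd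
  have hdc : 0 < d - c := by linarith
  rw [integral_div, hF, hG, hFG]
  field_simp [(Real.rpow_pos_of_pos hdt γ).ne', (Real.rpow_pos_of_pos hdc γ).ne', (sub_neg.2 htd).ne]
  ring

/-- for `X` uniform on `(c,d)` and `Y` its PHR companion
with constant `γ`, `J^w(X,Y;t) = (γt + d)/(2(γ+1)(t−d))` for `c ≤ t < d`. -/
theorem weighted_residual_inaccuracy_uniform_phr
    (c d γ t : ℝ) (hc : 0 ≤ c) (hcd : c < d) (hγ : 0 < γ)
    (ht : c ≤ t) (htd : t < d)
    (f g : ℝ → ℝ)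
    (hf : ∀ x, f x = if x ∈ Ioo c d then 1 / (d - c) else 0)
    (hg : ∀ x, g x = if x ∈ Ioo c d then γ * (d - x) ^ (γ - 1) / (d - c) ^ γ else 0) :
    -(1 / 2) * ∫ x in Ioi t,
        x * f x * g x / ((∫ y in Ioi t, f y) * (∫ y in Ioi t, g y))
      = (γ * t + d) / (2 * (γ + 1) * (t - d)) :=
  weighted_residual_inaccuracy_uniform_phr_general c d γ t hγ ht htd f g hf hg
end

section
/- Suppose X and Y satisfy the PHR model with constant γ > 0 and F̄(x) > 0 for all x ≥ 0. Then for every t ≥ 0, assuming ∫_t^∞ x λ_F(x)² dx is finite, the weighted residual inaccuracy satisfies the lower bound J^w(X,Y;t) ≥ -(γ/2)∫_t^∞ x λ_F(x)² dx, where λ_F(x) = f(x)/F̄(x) is the hazard rate of X. -/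
open MeasureTheory Set

/-! Under the PHR model `g = γ f F̄^(γ-1)`. For `x > t` we have `F̄(x) ≤ F̄(t)` and
`F̄(x)^γ ≤ F̄(t)^γ ≤ Ḡ(t)`, hence `F̄(x)^(γ+1) ≤ F̄(t) Ḡ(t)` and the integrand of `J^w` is bounded
pointwise by `γ x λ_F(x)²`. The inequality `F̄(t)^γ ≤ Ḡ(t)` comes from the monotone function
`-F̄^γ`, whose a.e. derivative is `g`: the integral of the a.e. derivative of a monotone function
is at most its increment, so `∫₀ᵗ g ≤ 1 - F̄(t)^γ` without any absolute continuity argument. -/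

theorem MeasureTheory.Integrable.ae_hasDerivAt_integral_Ioi {E : Type*} [NormedAddCommGroup E]
    [NormedSpace ℝ E] [CompleteSpace E] {f : ℝ → E} (hf : Integrable f) :
    ∀ᵐ x, HasDerivAt (fun x => ∫ y in Ioi x, f y) (-f x) x := by
  filter_upwards [LocallyIntegrable.ae_hasDerivAt_integral hf.locallyIntegrable] with x hx
  have h : (fun x => ∫ y in Ioi x, f y) = fun x => (∫ y in Ioi 0, f y) - ∫ y in 0..x, f y := by
    funext x
    rw [← intervalIntegral.integral_interval_add_Ioi (a := 0) hf.integrableOn hf.integrableOn,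
      add_sub_cancel_left]
  rw [h]
  exact (hx 0).const_sub _

theorem antitone_integral_Ioi {f : ℝ → ℝ} (hf : Integrable f) (hf_nonneg : ∀ x, 0 ≤ f x) :
    Antitone fun x => ∫ y in Ioi x, f y := fun _ _ hab =>
  setIntegral_mono_set hf.integrableOn (ae_of_all _ hf_nonneg) (Ioi_subset_Ioi hab).eventuallyLE

theorem setIntegral_Ioi_zero_eq_integral {E : Type*} [NormedAddCommGroup E] [NormedSpace ℝ E]
    {f : ℝ → E} (hf_zero : ∀ x < 0, f x = 0) : ∫ y in Ioi 0, f y = ∫ y, f y := by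
  rw [← integral_Ici_eq_integral_Ioi]
  exact setIntegral_eq_integral_of_forall_compl_eq_zero fun x hx => hf_zero x (not_le.1 hx)

theorem MonotoneOn.intervalIntegral_le_sub_of_ae_hasDerivAt {G g : ℝ → ℝ} {a b : ℝ}
    (hab : a ≤ b) (hG : MonotoneOn G (Icc a b))
    (hG' : ∀ᵐ x, x ∈ Ioc a b → HasDerivAt G (g x) x) :
    ∫ x in a..b, g x ≤ G b - G a := by
  have h : ∫ x in a..b, g x = ∫ x in a..b, deriv G x :=
    intervalIntegral.integral_congr_ae (by
      rw [uIoc_of_le hab]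
      filter_upwards [hG'] with x hx hxab using (hx hxab).deriv.symm)
  have hGab : G a ≤ G b := hG (left_mem_Icc.2 hab) (right_mem_Icc.2 hab) hab
  have hmem := (uIcc_of_le hab ▸ hG).intervalIntegral_deriv_mem_uIcc
  rw [uIcc_of_le (sub_nonneg.2 hGab)] at hmem
  exact h ▸ hmem.2

theorem rpow_sub_one_div_mul_le_inv_sq {s A B γ : ℝ} (hs : 0 < s) (hsA : s ≤ A)
    (hsB : s ^ γ ≤ B) : s ^ (γ - 1) / (A * B) ≤ (s ^ 2)⁻¹ := by
  have hB : 0 < B := (Real.rpow_pos_of_pos hs γ).trans_le hsB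
  have hA : 0 < A := hs.trans_le hsA
  have h : s ^ (γ - 1) * s ^ 2 = s ^ γ * s := by
    rw [Real.rpow_sub_one hs.ne']; field_simp
  rw [div_le_iff₀ (by positivity), ← div_eq_inv_mul, le_div_iff₀ (by positivity), h, mul_comm A]
  exact mul_le_mul hsB hsA hs.le hB.le

theorem mul_mul_phr_density_div_le {x y s A B γ : ℝ} (hγ : 0 ≤ γ) (hx : 0 ≤ x) (hs : 0 < s)
    (hsA : s ≤ A) (hsB : s ^ γ ≤ B) :
    x * y * (γ * y * s ^ (γ - 1)) / (A * B) ≤ γ * (x * (y / s) ^ 2) :=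
  calc x * y * (γ * y * s ^ (γ - 1)) / (A * B) = γ * x * y ^ 2 * (s ^ (γ - 1) / (A * B)) := by
        ring
    _ ≤ γ * x * y ^ 2 * (s ^ 2)⁻¹ := by
        gcongr
        exact rpow_sub_one_div_mul_le_inv_sq hs hsA hsB
    _ = γ * (x * (y / s) ^ 2) := by ring

theorem rpow_integral_Ioi_le_integral_Ioi_of_phr {f g : ℝ → ℝ} {γ : ℝ} (hγ : 0 < γ)
    (hf_int : Integrable f) (hg_int : Integrable g) (hf_nonneg : ∀ x, 0 ≤ f x)
    (hf_zero : ∀ x < 0, f x = 0) (hg_zero : ∀ x < 0, g x = 0)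
    (hf_one : ∫ x, f x = 1) (hg_one : ∫ x, g x = 1)
    (hFpos : ∀ x ≥ (0 : ℝ), 0 < ∫ y in Ioi x, f y)
    (hphr : ∀ x ≥ (0 : ℝ), g x = γ * f x * (∫ y in Ioi x, f y) ^ (γ - 1))
    {t : ℝ} (ht : 0 ≤ t) :
    (∫ y in Ioi t, f y) ^ γ ≤ ∫ y in Ioi t, g y := by
  set F : ℝ → ℝ := fun x => ∫ y in Ioi x, f y
  have hF0 : F 0 = 1 := (setIntegral_Ioi_zero_eq_integral hf_zero).trans hf_one
  have hG_mono : Monotone fun x => -F x ^ γ := fun a b hab =>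
    neg_le_neg <| Real.rpow_le_rpow (setIntegral_nonneg measurableSet_Ioi fun y _ => hf_nonneg y)
      (antitone_integral_Ioi hf_int hf_nonneg hab) hγ.le
  have hG_deriv : ∀ᵐ x, x ∈ Ioc 0 t → HasDerivAt (fun x => -F x ^ γ) (g x) x := by
    filter_upwards [hf_int.ae_hasDerivAt_integral_Ioi] with x hF_deriv hx
    rw [hphr x hx.1.le, show γ * f x * F x ^ (γ - 1) = -(-f x * γ * F x ^ (γ - 1)) by ring]
    exact (hF_deriv.rpow_const (Or.inl (hFpos x hx.1.le).ne')).neg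
  have hle := (hG_mono.monotoneOn (Icc 0 t)).intervalIntegral_le_sub_of_ae_hasDerivAt ht hG_deriv
  have hsplit := intervalIntegral.integral_interval_add_Ioi (a := 0) (b := t)
    hg_int.integrableOn hg_int.integrableOn
  rw [setIntegral_Ioi_zero_eq_integral hg_zero, hg_one] at hsplit
  simp only [hF0, Real.one_rpow] at hle
  linarith

theorem weighted_residual_inaccuracy_hazard_lower_bound_general
    (f g : ℝ → ℝ) (γ : ℝ) (hγ : 0 < γ)
    (hf_nonneg : ∀ x, 0 ≤ f x) (hg_nonneg : ∀ x, 0 ≤ g x)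
    (hf_zero : ∀ x < 0, f x = 0) (hg_zero : ∀ x < 0, g x = 0)
    (hf_one : ∫ x, f x = 1) (hg_one : ∫ x, g x = 1)
    (hFpos : ∀ x ≥ (0 : ℝ), 0 < ∫ y in Ioi x, f y)
    (hphr : ∀ x ≥ (0 : ℝ), g x = γ * f x * (∫ y in Ioi x, f y) ^ (γ - 1))
    (t : ℝ) (ht : 0 ≤ t)
    (hfin : IntegrableOn
      (fun x => x * (f x / (∫ y in Ioi x, f y)) ^ 2) (Ioi t)) :
    -(1 / 2) * ∫ x in Ioi t,
        x * f x * g x / ((∫ y in Ioi t, f y) * (∫ y in Ioi t, g y))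
      ≥ -(γ / 2) * ∫ x in Ioi t, x * (f x / (∫ y in Ioi x, f y)) ^ 2 := by
  have hf_int := integrable_of_integral_eq_one hf_one
  set A := ∫ y in Ioi t, f y
  set B := ∫ y in Ioi t, g y
  have hA : 0 < A := hFpos t ht
  have hAB : A ^ γ ≤ B := rpow_integral_Ioi_le_integral_Ioi_of_phr hγ hf_int
    (integrable_of_integral_eq_one hg_one) hf_nonneg hf_zero hg_zero hf_one hg_one hFpos hphr ht
  have hB : 0 < B := (Real.rpow_pos_of_pos hA γ).trans_le hAB
  have hbound : ∀ x ∈ Ioi t,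
      x * f x * g x / (A * B) ≤ γ * (x * (f x / ∫ y in Ioi x, f y) ^ 2) := by
    intro x hx
    have hx0 : 0 ≤ x := ht.trans hx.le
    have hFx := hFpos x hx0
    have hFxA : (∫ y in Ioi x, f y) ≤ A := antitone_integral_Ioi hf_int hf_nonneg hx.le
    rw [hphr x hx0]
    exact mul_mul_phr_density_div_le hγ.le hx0 hFx hFxA
      ((Real.rpow_le_rpow hFx.le hFxA hγ.le).trans hAB)
  have hnonneg : ∀ x ∈ Ioi t, 0 ≤ x * f x * g x / (A * B) := fun x hx =>
    div_nonneg (mul_nonneg (mul_nonneg (ht.trans hx.le) (hf_nonneg x)) (hg_nonneg x))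
      (mul_pos hA hB).le
  have hmono := integral_mono_of_nonneg (ae_restrict_of_forall_mem measurableSet_Ioi hnonneg)
    (hfin.const_mul γ) (ae_restrict_of_forall_mem measurableSet_Ioi hbound)
  rw [integral_const_mul] at hmono
  linarith

/-- under the PHR model,
`J^w(X,Y;t) ≥ -(γ/2)∫_t^∞ x λ_F(x)² dx`. -/
theorem weighted_residual_inaccuracy_hazard_lower_bound
    (f g : ℝ → ℝ) (γ : ℝ) (hγ : 0 < γ)
    (hf_meas : Measurable f) (hg_meas : Measurable g)
    (hf_nonneg : ∀ x, 0 ≤ f x) (hg_nonneg : ∀ x, 0 ≤ g x)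
    (hf_zero : ∀ x < 0, f x = 0) (hg_zero : ∀ x < 0, g x = 0)
    (hf_one : ∫ x, f x = 1) (hg_one : ∫ x, g x = 1)
    (hFpos : ∀ x ≥ (0 : ℝ), 0 < ∫ y in Ioi x, f y)
    (hphr : ∀ x ≥ (0 : ℝ), g x = γ * f x * (∫ y in Ioi x, f y) ^ (γ - 1))
    (t : ℝ) (ht : 0 ≤ t)
    (hfin : IntegrableOn
      (fun x => x * (f x / (∫ y in Ioi x, f y)) ^ 2) (Ioi t)) :
    -(1 / 2) * ∫ x in Ioi t,
        x * f x * g x / ((∫ y in Ioi t, f y) * (∫ y in Ioi t, g y))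
      ≥ -(γ / 2) * ∫ x in Ioi t, x * (f x / (∫ y in Ioi x, f y)) ^ 2 :=
  weighted_residual_inaccuracy_hazard_lower_bound_general f g γ hγ hf_nonneg hg_nonneg hf_zero
    hg_zero hf_one hg_one hFpos hphr t ht hfin
end

section
/- Fix t ≥ 0 with F̄(t) > 0 and Ḡ(x) > 0 for all x ≥ t, and suppose the hazard rate λ_G(x) = g(x)/Ḡ(x) of Y is decreasing on [t,∞). Then, assuming E(X) = ∫_0^∞ x f(x) dx < ∞, the weighted residual inaccuracy satisfies J^w(X,Y;t) ≥ -(1/2) λ_G(t) V(X;t), where V(X;t) = (1/F̄(t))∫_t^∞ x f(x) dx is the vitality (conditional mean) function of X. -/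
/-!
A decreasing hazard rate forces the density itself to decrease past `t`:
`g x = λ_G(x) Ḡ(x) ≤ λ_G(t) Ḡ(t) = g t` for `x ≥ t`, since both factors decrease.
Bounding `g x` by `g t` inside `∫_t^∞ x f(x) g(x) dx` gives `g t ∫_t^∞ x f(x) dx`,
which after normalisation is the claimed bound.
-/

open MeasureTheory Set

noncomputable section

def survival (g : ℝ → ℝ) (x : ℝ) : ℝ := ∫ y in Ioi x, g y

def hazardRate (g : ℝ → ℝ) (x : ℝ) : ℝ := g x / survival g x

end

section

variable {g : ℝ → ℝ} {t x : ℝ}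

lemma survival_nonneg (hg : ∀ x, 0 ≤ g x) (x : ℝ) : 0 ≤ survival g x :=
  setIntegral_nonneg measurableSet_Ioi fun y _ ↦ hg y

lemma survival_le_of_le (hg : ∀ x, 0 ≤ g x) (hpos : 0 < survival g t) (hxt : t ≤ x) :
    survival g x ≤ survival g t :=
  setIntegral_mono_set (.of_integral_ne_zero hpos.ne') (.of_forall hg)
    (Ioi_subset_Ioi hxt).eventuallyLE

lemma le_of_antitoneOn_hazardRate (hg : ∀ x, 0 ≤ g x) (hpos : ∀ x ≥ t, 0 < survival g x)
    (hanti : AntitoneOn (hazardRate g) (Ici t)) (hxt : t ≤ x) : g x ≤ g t := by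
  have hSt := hpos t le_rfl
  have hSx := hpos x hxt
  calc g x = hazardRate g x * survival g x := (div_mul_cancel₀ _ hSx.ne').symm
    _ ≤ hazardRate g t * survival g x :=
      mul_le_mul_of_nonneg_right (hanti self_mem_Ici hxt hxt) hSx.le
    _ ≤ hazardRate g t * survival g t :=
      mul_le_mul_of_nonneg_left (survival_le_of_le hg hSt hxt) (div_nonneg (hg t) hSt.le)
    _ = g t := div_mul_cancel₀ _ hSt.ne'

end

lemma setIntegral_mul_le_const_mul {α : Type*} [MeasurableSpace α] {μ : Measure α} {s : Set α}
    {w g : α → ℝ} {c : ℝ} (hw : IntegrableOn w s μ) (hw0 : ∀ x ∈ s, 0 ≤ w x)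
    (hg0 : ∀ x ∈ s, 0 ≤ g x) (hgc : ∀ x ∈ s, g x ≤ c) :
    ∫ x in s, w x * g x ∂μ ≤ c * ∫ x in s, w x ∂μ := by
  rw [← integral_const_mul]
  refine setIntegral_mono_of_nonneg (fun x hx ↦ mul_nonneg (hw0 x hx) (hg0 x hx))
    (fun x hx ↦ ?_) (hw.const_mul c)
  rw [mul_comm c]
  exact mul_le_mul_of_nonneg_left (hgc x hx) (hw0 x hx)

theorem weighted_residual_inaccuracy_vitality_lower_bound_general
    (f g : ℝ → ℝ)
    (hf_nonneg : ∀ x, 0 ≤ f x) (hg_nonneg : ∀ x, 0 ≤ g x)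
    (t : ℝ) (ht : 0 ≤ t)
    (hG : ∀ x ≥ t, 0 < ∫ y in Ioi x, g y)
    (hG_anti : AntitoneOn (fun x => g x / (∫ y in Ioi x, g y)) (Ici t))
    (hmean : IntegrableOn (fun x => x * f x) (Ioi 0)) :
    -(1 / 2) * ∫ x in Ioi t,
        x * f x * g x / ((∫ y in Ioi t, f y) * (∫ y in Ioi t, g y))
      ≥ -(1 / 2) * (g t / (∫ y in Ioi t, g y)) *
          ((∫ x in Ioi t, x * f x) / (∫ y in Ioi t, f y)) := by
  have hxf_nonneg : ∀ x ∈ Ioi t, 0 ≤ x * f x := fun x hx ↦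
    mul_nonneg (ht.trans hx.le) (hf_nonneg x)
  have hg_le : ∀ x ∈ Ioi t, g x ≤ g t := fun x hx ↦
    le_of_antitoneOn_hazardRate hg_nonneg hG hG_anti hx.le
  have hkey : ∫ x in Ioi t, x * f x * g x ≤ g t * ∫ x in Ioi t, x * f x :=
    setIntegral_mul_le_const_mul (hmean.mono_set (Ioi_subset_Ioi ht)) hxf_nonneg
      (fun x _ ↦ hg_nonneg x) hg_le
  have hnorm : 0 ≤ (∫ y in Ioi t, f y) * ∫ y in Ioi t, g y :=
    mul_nonneg (survival_nonneg hf_nonneg t) (hG t le_rfl).le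
  rw [integral_div, ge_iff_le, mul_assoc, div_mul_div_comm, mul_comm (∫ y in Ioi t, g y)]
  exact mul_le_mul_of_nonpos_left (div_le_div_of_nonneg_right hkey hnorm) (by norm_num)

/-- if the hazard rate of `Y` is decreasing on `[t,∞)`, then
`J^w(X,Y;t) ≥ -(1/2) λ_G(t) V(X;t)`. -/
theorem weighted_residual_inaccuracy_vitality_lower_bound
    (f g : ℝ → ℝ)
    (hf_meas : Measurable f) (hg_meas : Measurable g)
    (hf_nonneg : ∀ x, 0 ≤ f x) (hg_nonneg : ∀ x, 0 ≤ g x)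
    (hf_zero : ∀ x < 0, f x = 0) (hg_zero : ∀ x < 0, g x = 0)
    (hf_one : ∫ x, f x = 1) (hg_one : ∫ x, g x = 1)
    (t : ℝ) (ht : 0 ≤ t)
    (hF : 0 < ∫ x in Ioi t, f x)
    (hG : ∀ x ≥ t, 0 < ∫ y in Ioi x, g y)
    (hG_anti : AntitoneOn (fun x => g x / (∫ y in Ioi x, g y)) (Ici t))
    (hmean : IntegrableOn (fun x => x * f x) (Ioi 0)) :
    -(1 / 2) * ∫ x in Ioi t,
        x * f x * g x / ((∫ y in Ioi t, f y) * (∫ y in Ioi t, g y))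
      ≥ -(1 / 2) * (g t / (∫ y in Ioi t, g y)) *
          ((∫ x in Ioi t, x * f x) / (∫ y in Ioi t, f y)) :=
  weighted_residual_inaccuracy_vitality_lower_bound_general f g hf_nonneg hg_nonneg t ht hG hG_anti
    hmean
end
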